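/- For every odd natural number n, there exists a simple graph G on a vertex type of cardinality 2^n such that G is twin-free and the F2-rank of G is at most n + 1. -/

import Mathlib

/-!
Write `n = 2m + 1` and let `ω(x, y) = x ⬝ᵥ J *ᵥ y` be the standard symplectic form on
`𝔽₂^(2m+2)`. Take as vertices the `2^n` points of the affine hyperplane `x₀ = 1`, adjacent when
`ω(x, y) = 1`; there are no loops because `ω` is alternating. If `P` has these points as rows, the
adjacency matrix is `P J Pᵀ`, of rank at most `2m + 2 = n + 1`. Two vertices with equal
neighbourhoods give rows `x ᵥ* J` and `y ᵥ* J` that agree on the hyperplane; since the hyperplane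
spans `𝔽₂^(2m+2)` they are equal, and as `J` is invertible, `x = y`.
-/

open Matrix

section LinearAlgebra

variable {ι : Type*} [Fintype ι]

lemma dotProduct_mulVec_comm_of_isSymm {R : Type*} [CommSemiring R] {A : Matrix ι ι R}
    (hA : A.IsSymm) (x y : ι → R) : x ⬝ᵥ A *ᵥ y = y ⬝ᵥ A *ᵥ x := by
  rw [dotProduct_mulVec, ← mulVec_transpose, hA.eq, dotProduct_comm]

lemma eq_of_dotProduct_eq_of_apply_eq_one {R : Type*} [CommRing R] [DecidableEq ι]
    {v w : ι → R} (i : ι) (h : ∀ z : ι → R, z i = 1 → v ⬝ᵥ z = w ⬝ᵥ z) : v = w := by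
  refine dotProduct_eq v w fun z => ?_
  have hi : (Pi.single i 1 : ι → R) i = 1 := Pi.single_eq_same i 1
  have hz : (z + (1 - z i) • Pi.single i 1 : ι → R) i = 1 := by simp
  have := h _ hz
  simp only [dotProduct_add, dotProduct_smul, h _ hi] at this
  exact add_right_cancel this

lemma card_subtype_apply_eq {κ : Type*} [Fintype κ] [DecidableEq κ] [DecidableEq ι]
    (i : ι) (c : κ) :
    Fintype.card {x : ι → κ // x i = c} = Fintype.card κ ^ (Fintype.card ι - 1) := by
  rw [Fintype.card_subtype, ← Fintype.piFinset_univ]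
  exact Fintype.card_filter_piFinset_const_eq_of_mem _ _ (Finset.mem_univ c)

end LinearAlgebra

lemma dotProduct_J_mulVec_self {l R : Type*} [Fintype l] [DecidableEq l] [CommRing R]
    (x : l ⊕ l → R) : x ⬝ᵥ J l R *ᵥ x = 0 := by
  rw [← Sum.elim_comp_inl_inr x, J, fromBlocks_mulVec, sumElim_dotProduct_sumElim]
  simp [neg_mulVec, dotProduct_comm (x ∘ Sum.inr)]

lemma isSymm_J_zmod_two (l : Type*) [DecidableEq l] : (J l (ZMod 2)).IsSymm := by
  rw [IsSymm, J_transpose]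
  exact Matrix.ext fun _ _ => ZMod.neg_eq_self_mod_two _

def altFormGraph {ι V : Type*} [Fintype ι] (A : Matrix ι ι (ZMod 2)) (hA : A.IsSymm)
    (hA₀ : ∀ x, x ⬝ᵥ A *ᵥ x = 0) (φ : V → ι → ZMod 2) : SimpleGraph V where
  Adj u v := φ u ⬝ᵥ A *ᵥ φ v = 1
  symm := ⟨fun u v h => by rwa [dotProduct_mulVec_comm_of_isSymm hA]⟩
  loopless := ⟨fun u h => by simp [hA₀] at h⟩

section altFormGraph

variable {ι V : Type*} [Fintype ι] (A : Matrix ι ι (ZMod 2)) (hA : A.IsSymm)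
  (hA₀ : ∀ x, x ⬝ᵥ A *ᵥ x = 0) (φ : V → ι → ZMod 2)

@[simp]
lemma altFormGraph_adj {u v : V} :
    (altFormGraph A hA hA₀ φ).Adj u v ↔ φ u ⬝ᵥ A *ᵥ φ v = 1 :=
  Iff.rfl

instance : DecidableRel (altFormGraph A hA hA₀ φ).Adj :=
  fun _ _ => decidable_of_iff' _ (altFormGraph_adj A hA hA₀ φ)

lemma adjMatrix_altFormGraph [DecidableEq V] :
    (altFormGraph A hA hA₀ φ).adjMatrix (ZMod 2) = of φ * A * (of φ)ᵀ := by
  ext u v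
  have hZMod2 : ∀ t : ZMod 2, (if t = 1 then 1 else 0) = t := by decide
  simp only [SimpleGraph.adjMatrix_apply, altFormGraph_adj, hZMod2]
  rw [dotProduct_mulVec, mul_apply']
  rfl

lemma rank_adjMatrix_altFormGraph_le [Fintype V] [DecidableEq V] :
    ((altFormGraph A hA hA₀ φ).adjMatrix (ZMod 2)).rank ≤ Fintype.card ι := by
  rw [adjMatrix_altFormGraph]
  exact (rank_mul_le_right _ _).trans (rank_le_card_height _)

lemma neighborSet_altFormGraph_injective [DecidableEq ι] (hA_unit : IsUnit A)
    (hφ : Function.Injective φ) (i : ι) (hφ_range : ∀ z, z i = 1 → z ∈ Set.range φ) :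
    Function.Injective (altFormGraph A hA hA₀ φ).neighborSet := by
  intro u v huv
  have hZMod2 : ∀ a b : ZMod 2, (a = 1 ↔ b = 1) → a = b := by decide
  have hrow : φ u ᵥ* A = φ v ᵥ* A := by
    refine eq_of_dotProduct_eq_of_apply_eq_one i fun z hz => ?_
    obtain ⟨w, rfl⟩ := hφ_range z hz
    rw [← dotProduct_mulVec, ← dotProduct_mulVec]
    exact hZMod2 _ _ (by simpa using Set.ext_iff.1 huv w)
  exact hφ (vecMul_injective_iff_isUnit.2 hA_unit hrow)

end altFormGraph

/-- For every odd natural number `n`, there exists a simple graph `G` on a vertex type of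
cardinality `2^n` such that `G` is twin-free and the `F2`-rank of `G` is at most `n + 1`. -/
theorem stmt_17 (n : ℕ) (hn : Odd n) :
    ∃ (G : SimpleGraph (Fin (2 ^ n))) (_ : DecidableRel G.Adj),
      (∀ u v : Fin (2 ^ n), G.neighborSet u = G.neighborSet v → u = v) ∧
      (G.adjMatrix (ZMod 2)).rank ≤ n + 1 := by
  obtain ⟨m, rfl⟩ := hn
  let i₀ : Fin (m + 1) ⊕ Fin (m + 1) := Sum.inl 0
  have hcard : Fintype.card {x : Fin (m + 1) ⊕ Fin (m + 1) → ZMod 2 // x i₀ = 1} =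
      2 ^ (2 * m + 1) := by
    rw [card_subtype_apply_eq, ZMod.card, Fintype.card_sum, Fintype.card_fin]
    congr 1; omega
  let e := (Fintype.equivFinOfCardEq hcard).symm
  let φ : Fin (2 ^ (2 * m + 1)) → Fin (m + 1) ⊕ Fin (m + 1) → ZMod 2 := fun v => e v
  refine ⟨altFormGraph (J _ (ZMod 2)) (isSymm_J_zmod_two _) dotProduct_J_mulVec_self φ,
    inferInstance, ?_, ?_⟩
  · exact neighborSet_altFormGraph_injective _ _ _ φ
      ((isUnit_iff_isUnit_det _).2 (isUnit_det_J _ _)) (Subtype.val_injective.comp e.injective)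
      i₀ fun z hz => ⟨e.symm ⟨z, hz⟩, by simp [φ]⟩
  · calc _ ≤ Fintype.card (Fin (m + 1) ⊕ Fin (m + 1)) := rank_adjMatrix_altFormGraph_le _ _ _ _
      _ = 2 * m + 1 + 1 := by simp only [Fintype.card_sum, Fintype.card_fin]; ring
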